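/- Let P and Q be lattice polytopes in R^n with Q a Minkowski summand of P. Then the signed Minkowski difference P - Q = {x in R^n : x + Q is contained in P} is a lattice polytope, i.e. all its vertices lie in Z^n. -/

import Mathlib

open Finset Pointwise
open scoped Classical

namespace TropFact

/-- Real dot product on `Fin n → ℝ`. -/
def dotR {n : ℕ} (v x : Fin n → ℝ) : ℝ := ∑ i, v i * x i

/-- Integer dot product. -/
def dotZ {n : ℕ} (v w : Fin n → ℤ) : ℤ := ∑ i, v i * w i

/-- Coercion of an integer vector to a real vector. -/
def toR {n : ℕ} (v : Fin n → ℤ) : Fin n → ℝ := fun i => (v i : ℝ)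

/-- Translate of a set by a vector. -/
def translate {n : ℕ} (v : Fin n → ℝ) (P : Set (Fin n → ℝ)) : Set (Fin n → ℝ) :=
  (fun x => v + x) '' P

/-- A polytope is the convex hull of a nonempty finite set of points. -/
def IsPolytope {n : ℕ} (P : Set (Fin n → ℝ)) : Prop :=
  ∃ A : Finset (Fin n → ℝ), A.Nonempty ∧ P = convexHull ℝ (A : Set (Fin n → ℝ))

/-- A lattice polytope is the convex hull of a nonempty finite set of lattice points. -/
def IsLatticePolytope {n : ℕ} (P : Set (Fin n → ℝ)) : Prop :=
  ∃ A : Finset (Fin n → ℤ), A.Nonempty ∧ P = convexHull ℝ (toR '' (A : Set (Fin n → ℤ)))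

/-- Dilation of a set by a natural number. -/
def dil {n : ℕ} (c : ℕ) (P : Set (Fin n → ℝ)) : Set (Fin n → ℝ) :=
  (fun x => (c : ℝ) • x) '' P

/-- The face of `P` supported by the linear functional `⟨v, ·⟩`. -/
def faceOf {n : ℕ} (v : Fin n → ℝ) (P : Set (Fin n → ℝ)) : Set (Fin n → ℝ) :=
  {x | x ∈ P ∧ ∀ y ∈ P, dotR v y ≤ dotR v x}

/-- `F` is a face of `P`. (Taking `v = 0` shows `P` itself is a face.) -/
def IsFace {n : ℕ} (F P : Set (Fin n → ℝ)) : Prop := ∃ v, F = faceOf v P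

/-- A proper face: a face that is neither `P` itself nor a vertex (singleton). -/
def IsProperFace {n : ℕ} (F P : Set (Fin n → ℝ)) : Prop :=
  IsFace F P ∧ F ≠ P ∧ ¬ ∃ x, F = {x}

/-- An edge of `P`: a face that is a nondegenerate segment. -/
def IsEdge {n : ℕ} (e P : Set (Fin n → ℝ)) : Prop :=
  IsFace e P ∧ ∃ a b : Fin n → ℝ, a ≠ b ∧ e = segment ℝ a b

/-- The segment `e` is parallel to the vector `w`. -/
def ParallelTo {n : ℕ} (e : Set (Fin n → ℝ)) (w : Fin n → ℝ) : Prop :=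
  ∃ a b : Fin n → ℝ, a ≠ b ∧ e = segment ℝ a b ∧ ∃ t : ℝ, t ≠ 0 ∧ b - a = t • w

/-- The segment `e` is parallel to the segment `E`. -/
def ParallelSeg {n : ℕ} (e E : Set (Fin n → ℝ)) : Prop :=
  ∃ a b a' b' : Fin n → ℝ, a ≠ b ∧ a' ≠ b' ∧ e = segment ℝ a b ∧ E = segment ℝ a' b' ∧
    ∃ t : ℝ, t ≠ 0 ∧ b - a = t • (b' - a')

/-- The segment `e` is, as a vector, an integer multiple of the segment `e'`. -/
def IntMultOfEdge {n : ℕ} (e e' : Set (Fin n → ℝ)) : Prop :=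
  ∃ (a b a' b' : Fin n → ℝ) (k : ℤ), a ≠ b ∧ a' ≠ b' ∧ e = segment ℝ a b ∧
    e' = segment ℝ a' b' ∧ b - a = (k : ℝ) • (b' - a')

/-- `Q` is a Minkowski summand of `P`. -/
def IsSummand {n : ℕ} (Q P : Set (Fin n → ℝ)) : Prop :=
  ∃ R : Set (Fin n → ℝ), IsPolytope R ∧ Q + R = P

/-- Signed Minkowski difference `P - Q = {x : x + Q ⊆ P}`. -/
def mdiff {n : ℕ} (P Q : Set (Fin n → ℝ)) : Set (Fin n → ℝ) :=
  {x | translate x Q ⊆ P}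

/-- `P ≡ Q`: `P` is a `ℤⁿ`-translate of `Q`. -/
def TransEquiv {n : ℕ} (P Q : Set (Fin n → ℝ)) : Prop :=
  ∃ v : Fin n → ℤ, P = translate (toR v) Q

/-- `F ∈ 𝐍𝒮`: `F` is a lattice polytope that is a translate of an `ℕ`-Minkowski
combination of the polytopes in `𝒮`. -/
def memNSP {n : ℕ} (𝒮 : Finset (Set (Fin n → ℝ))) (F : Set (Fin n → ℝ)) : Prop :=
  IsLatticePolytope F ∧
    ∃ y : Set (Fin n → ℝ) → ℕ, TransEquiv F (∑ S ∈ 𝒮, dil (y S) S)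

/-- `F ∈ 𝐙𝒮`: `F + G ∈ 𝐍𝒮` for some `G ∈ 𝐍𝒮`. -/
def memZSP {n : ℕ} (𝒮 : Finset (Set (Fin n → ℝ))) (F : Set (Fin n → ℝ)) : Prop :=
  IsLatticePolytope F ∧ ∃ G, memNSP 𝒮 G ∧ memNSP 𝒮 (F + G)

/-- `F ∈ 𝐄𝒮`: `F + G ∈ 𝐍𝒮` for some lattice polytope `G`. -/
def memESP {n : ℕ} (𝒮 : Finset (Set (Fin n → ℝ))) (F : Set (Fin n → ℝ)) : Prop :=
  IsLatticePolytope F ∧ ∃ G, IsLatticePolytope G ∧ memNSP 𝒮 (F + G)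

/-- Dimension of a polytope: the rank of its vector span. -/
noncomputable def polyDim {n : ℕ} (P : Set (Fin n → ℝ)) : ℕ :=
  Module.finrank ℝ ↥(vectorSpan ℝ P)

/-- A primitive integer vector: the gcd of its coordinates is 1. -/
def IsPrimitive {n : ℕ} (v : Fin n → ℤ) : Prop := Finset.univ.gcd v = 1

/-- `v` is a row of the H-matrix of the polytope `P`: a primitive outer normal
vector of a facet (codimension-one face) of `P`. -/
def HRowP {n : ℕ} (P : Set (Fin n → ℝ)) (v : Fin n → ℤ) : Prop :=
  IsPrimitive v ∧ polyDim (faceOf (toR v) P) + 1 = polyDim P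

/-- `Q` is `H(P)`-representable: a Minkowski summand of a positive dilate of `P`. -/
def HRepP {n : ℕ} (P Q : Set (Fin n → ℝ)) : Prop :=
  ∃ c : ℕ, 0 < c ∧ IsSummand Q (dil c P)

/-- `b` is the `H(P)`-constant of `Q`: the coordinatewise minimal integer vector
(indexed by rows of `H(P)`) with `Q = {x : H(P) x ≤ b}`. -/
def IsBHP {n : ℕ} (P Q : Set (Fin n → ℝ))
    (b : {v : Fin n → ℤ // HRowP P v} → ℤ) : Prop :=
  (Q = {x | ∀ v : {v : Fin n → ℤ // HRowP P v}, dotR (toR v.1) x ≤ (b v : ℝ)}) ∧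
  ∀ b' : {v : Fin n → ℤ // HRowP P v} → ℤ,
    (Q = {x | ∀ v : {v : Fin n → ℤ // HRowP P v}, dotR (toR v.1) x ≤ (b' v : ℝ)}) →
    ∀ v, b v ≤ b' v

/-- The Minkowski sum of all polytopes in `𝒮`. -/
def totalSum {n : ℕ} (𝒮 : Finset (Set (Fin n → ℝ))) : Set (Fin n → ℝ) := ∑ S ∈ 𝒮, S

/-- Rows of the H-matrix of `𝒮`. -/
abbrev HRow {n : ℕ} (𝒮 : Finset (Set (Fin n → ℝ))) (v : Fin n → ℤ) : Prop :=
  HRowP (totalSum 𝒮) v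

/-- `H(𝒮)`-representability. -/
abbrev HRep {n : ℕ} (𝒮 : Finset (Set (Fin n → ℝ))) (Q : Set (Fin n → ℝ)) : Prop :=
  HRepP (totalSum 𝒮) Q

/-- `b` is the `H(𝒮)`-constant of `Q`. -/
abbrev IsBH {n : ℕ} (𝒮 : Finset (Set (Fin n → ℝ))) (Q : Set (Fin n → ℝ))
    (b : {v : Fin n → ℤ // HRowP (totalSum 𝒮) v} → ℤ) : Prop :=
  IsBHP (totalSum 𝒮) Q b

/-- `𝒮` is a basis: the vectors `B(𝒮) = {b^H(S) : S ∈ 𝒮}` are `ℤ`-linearly independent. -/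
def IsBasis {n : ℕ} (𝒮 : Finset (Set (Fin n → ℝ))) : Prop :=
  ∃ b : 𝒮 → ({v : Fin n → ℤ // HRow 𝒮 v} → ℤ),
    (∀ S : 𝒮, IsBH 𝒮 S.1 (b S)) ∧ LinearIndependent ℤ b

/-- `𝒮` is a full basis: `B(𝒮)` is a `ℤ`-basis of the subgroup generated by the
`H`-constants of all nonempty `H`-representable lattice polytopes. -/
def IsFullBasis {n : ℕ} (𝒮 : Finset (Set (Fin n → ℝ))) : Prop :=
  ∃ b : 𝒮 → ({v : Fin n → ℤ // HRow 𝒮 v} → ℤ),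
    (∀ S : 𝒮, IsBH 𝒮 S.1 (b S)) ∧ LinearIndependent ℤ b ∧
    Submodule.span ℤ (Set.range b) =
      Submodule.span ℤ {c | ∃ F : Set (Fin n → ℝ),
        F.Nonempty ∧ IsLatticePolytope F ∧ HRep 𝒮 F ∧ IsBH 𝒮 F c}

/-- `𝒮` is hierarchical: every proper face of every member lies in `𝐍𝒮`. -/
def Hierarchical {n : ℕ} (𝒮 : Finset (Set (Fin n → ℝ))) : Prop :=
  ∀ S ∈ 𝒮, ∀ F, IsProperFace F S → memNSP 𝒮 F

/-- `𝒮` is canonical: no proper face of a member is a Minkowski summand of it. -/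
def Canonical {n : ℕ} (𝒮 : Finset (Set (Fin n → ℝ))) : Prop :=
  ∀ S ∈ 𝒮, ∀ F, IsProperFace F S → ¬ IsSummand F S

/-- `𝒮` admits a positive orientation. -/
def IsPositive {n : ℕ} (𝒮 : Finset (Set (Fin n → ℝ))) : Prop :=
  ∃ τ : (Fin n → ℤ) → ℤ, ∀ v, HRow 𝒮 v →
    (τ v = 1 ∨ τ v = -1) ∧ τ (-v) = -τ v ∧
    (τ v = 1 → ∀ S ∈ 𝒮, ¬ IsProperFace (faceOf (toR (-v)) S) S)

/-- A positive basis: a hierarchical basis of lattice polytopes admitting a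
positive orientation. -/
def IsPositiveBasis {n : ℕ} (𝒮 : Finset (Set (Fin n → ℝ))) : Prop :=
  (∀ S ∈ 𝒮, IsLatticePolytope S) ∧ Hierarchical 𝒮 ∧ IsBasis 𝒮 ∧ IsPositive 𝒮

/-- A full positive basis. -/
def IsFullPositiveBasis {n : ℕ} (𝒮 : Finset (Set (Fin n → ℝ))) : Prop :=
  (∀ S ∈ 𝒮, IsLatticePolytope S) ∧ Hierarchical 𝒮 ∧ IsFullBasis 𝒮 ∧ IsPositive 𝒮

/-! ### Tropical polynomials -/

/-- A tropical polynomial: `f x = max over a in A of (c a + ⟨a, x⟩)`. -/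
def IsTropPoly {n : ℕ} (f : (Fin n → ℝ) → ℝ) : Prop :=
  ∃ (A : Finset (Fin n → ℤ)) (hA : A.Nonempty) (c : (Fin n → ℤ) → ℝ),
    ∀ x, f x = A.sup' hA fun a => c a + dotR (toR a) x

/-- The Newton polytope of `f`, via the domain of finiteness of the Legendre transform. -/
def newt {n : ℕ} (f : (Fin n → ℝ) → ℝ) : Set (Fin n → ℝ) :=
  {y | BddAbove (Set.range fun x => dotR y x - f x)}

/-- The Legendre transform `f*` of `f` (meaningful on `newt f`). -/
noncomputable def legendre {n : ℕ} (f : (Fin n → ℝ) → ℝ) (y : Fin n → ℝ) : ℝ :=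
  sSup (Set.range fun x => dotR y x - f x)

/-- The cell of the regular subdivision `Δ_f` picked out by `x`: the projection of
the face of the lower convex hull of the lifted points supported by `(x, 1)`,
i.e. the argmax of `y ↦ ⟨y, x⟩ - f*(y)` over the Newton polytope. -/
def cellAt {n : ℕ} (f : (Fin n → ℝ) → ℝ) (x : Fin n → ℝ) : Set (Fin n → ℝ) :=
  {y | y ∈ newt f ∧ dotR y x - legendre f y = f x}

/-- `σ` is a cell of the regular subdivision `Δ_f`. -/
def IsCellOf {n : ℕ} (f : (Fin n → ℝ) → ℝ) (σ : Set (Fin n → ℝ)) : Prop :=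
  ∃ x, σ = cellAt f x

/-- A unit: a tropical polynomial inducing the trivial subdivision of its Newton
polytope (some cell of `Δ_f` is all of `newt f`). -/
def IsTropUnit {n : ℕ} (f : (Fin n → ℝ) → ℝ) : Prop :=
  IsTropPoly f ∧ ∃ x, cellAt f x = newt f

/-- An `𝒮`-unit: a unit whose Newton polytope is a `ℤⁿ`-translate of a member of `𝒮`. -/
def IsSUnit {n : ℕ} (𝒮 : Finset (Set (Fin n → ℝ))) (f : (Fin n → ℝ) → ℝ) : Prop :=
  IsTropUnit f ∧ ∃ S ∈ 𝒮, TransEquiv (newt f) S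

/-- An affine function with integral linear part. -/
def AffineTerm {n : ℕ} (g : (Fin n → ℝ) → ℝ) : Prop :=
  ∃ (a : ℝ) (v : Fin n → ℤ), ∀ x, g x = a + dotR (toR v) x

/-- `f ∈ 𝐍[𝒮]`: up to an additive affine function, `f` is a finite tropical
product (= pointwise sum) of `𝒮`-units. -/
def memNS {n : ℕ} (𝒮 : Finset (Set (Fin n → ℝ))) (f : (Fin n → ℝ) → ℝ) : Prop :=
  ∃ (L : List ((Fin n → ℝ) → ℝ)) (g : (Fin n → ℝ) → ℝ),
    (∀ u ∈ L, IsSUnit 𝒮 u) ∧ AffineTerm g ∧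
    ∀ x, f x = g x + (L.map fun u => u x).sum

/-- `f ∈ 𝐙[𝒮]`: `f ⊙ g ∈ 𝐍[𝒮]` for some `g ∈ 𝐍[𝒮]`. -/
def memZS {n : ℕ} (𝒮 : Finset (Set (Fin n → ℝ))) (f : (Fin n → ℝ) → ℝ) : Prop :=
  ∃ g, memNS 𝒮 g ∧ memNS 𝒮 (fun x => f x + g x)

/-- A finite tropical product of units. -/
def ProductOfUnits {n : ℕ} (g : (Fin n → ℝ) → ℝ) : Prop :=
  ∃ L : List ((Fin n → ℝ) → ℝ), (∀ u ∈ L, IsTropUnit u) ∧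
    ∀ x, g x = (L.map fun u => u x).sum

/-- `f ∈ 𝐄[𝒮]`: `f ⊙ g ∈ 𝐍[𝒮]` for some finite tropical product of units `g`. -/
def memES {n : ℕ} (𝒮 : Finset (Set (Fin n → ℝ))) (f : (Fin n → ℝ) → ℝ) : Prop :=
  ∃ g, ProductOfUnits g ∧ memNS 𝒮 (fun x => f x + g x)

/-- Two tropical polynomials are identified when they differ by an additive affine
function. -/
def AffEquiv {n : ℕ} (g h : (Fin n → ℝ) → ℝ) : Prop :=
  ∃ (a : ℝ) (v : Fin n → ℤ), ∀ x, g x = a + dotR (toR v) x + h x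

/-- Two lists of factors agree up to reordering and additive affine functions. -/
def FactorEquiv {n : ℕ} (L L' : List ((Fin n → ℝ) → ℝ)) : Prop :=
  ∃ M, List.Perm L M ∧ List.Forall₂ AffEquiv M L'

/-- `𝐍[𝒮]` has unique factorization: any two factorizations of the same `f` into
`𝒮`-units agree up to reordering and additive affine functions. -/
def UniqueFactorizationNS {n : ℕ} (𝒮 : Finset (Set (Fin n → ℝ))) : Prop :=
  ∀ (f : (Fin n → ℝ) → ℝ) (L L' : List ((Fin n → ℝ) → ℝ))
    (g g' : (Fin n → ℝ) → ℝ),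
    (∀ u ∈ L, IsSUnit 𝒮 u) → AffineTerm g →
    (∀ x, f x = g x + (L.map fun u => u x).sum) →
    (∀ u ∈ L', IsSUnit 𝒮 u) → AffineTerm g' →
    (∀ x, f x = g' x + (L'.map fun u => u x).sum) →
    FactorEquiv L L'

/-- `𝐍[𝒮]` has local factorization: every tropical polynomial all of whose cells
of `Δ_f` lie in `𝐍𝒮` belongs to `𝐍[𝒮]`. -/
def LocalFactorizationNS {n : ℕ} (𝒮 : Finset (Set (Fin n → ℝ))) : Prop :=
  ∀ f : (Fin n → ℝ) → ℝ, IsTropPoly f →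
    (∀ σ, IsCellOf f σ → memNSP 𝒮 σ) → memNS 𝒮 f

end TropFact

/-!
Write `P = Q + R`; then `P - Q = R`. A vertex `x` of the polytope `R` is exposed by some
functional `l`, and the `l`-face of `P` is the `l`-face of `Q` translated by `x`. So for a vertex
`q` of that face, `q` is a vertex of `Q` and `x + q` a vertex of `P`: both are lattice points,
hence so is `x`.
-/

section Convex

variable {E : Type*} [NormedAddCommGroup E] [NormedSpace ℝ E]

lemma add_mem_extremePoints_singleton_add {A : Set E} {a : E} (ha : a ∈ A.extremePoints ℝ)
    (x : E) : x + a ∈ ({x} + A).extremePoints ℝ := by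
  rw [Set.singleton_add, mem_extremePoints_iff_left]
  refine ⟨Set.mem_image_of_mem _ ha.1, ?_⟩
  rintro _ ⟨b, hb, rfl⟩ _ ⟨c, hc, rfl⟩ hbc
  exact congrArg (x + ·) (ha.2 hb hc ((mem_openSegment_translate ℝ x).1 hbc))

lemma ContinuousLinearMap.toExposed_add (l : StrongDual ℝ E) (A B : Set E) :
    l.toExposed (A + B) = l.toExposed A + l.toExposed B := by
  ext p
  constructor
  · rintro ⟨⟨a, ha, b, hb, rfl⟩, hmax⟩
    refine ⟨a, ⟨ha, fun a' ha' => ?_⟩, b, ⟨hb, fun b' hb' => ?_⟩, rfl⟩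
    · simpa using hmax _ (Set.add_mem_add ha' hb)
    · simpa using hmax _ (Set.add_mem_add ha hb')
  · rintro ⟨a, ⟨ha, hamax⟩, b, ⟨hb, hbmax⟩, rfl⟩
    refine ⟨Set.add_mem_add ha hb, ?_⟩
    rintro _ ⟨a', ha', b', hb', rfl⟩
    simpa using add_le_add (hamax a' ha') (hbmax b' hb')

lemma ContinuousLinearMap.toExposed_eq_singleton {A : Set E} {x : E} {l : StrongDual ℝ E}
    (hl : ∀ y ∈ A, l y ≤ l x ∧ (l x ≤ l y → y = x)) (hx : x ∈ A) :
    l.toExposed A = {x} := by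
  ext y
  refine ⟨fun hy => (hl y hy.1).2 (hy.2 x hx), ?_⟩
  rintro rfl
  exact ⟨hx, fun z hz => (hl z hz).1⟩

lemma exists_add_mem_extremePoints_add {Q R : Set E} (hQ : IsCompact Q) (hQne : Q.Nonempty)
    {x : E} (hx : x ∈ R.exposedPoints ℝ) :
    ∃ q ∈ Q.extremePoints ℝ, x + q ∈ (Q + R).extremePoints ℝ := by
  obtain ⟨hxR, l, hl⟩ := hx
  have hface : l.toExposed (Q + R) = {x} + l.toExposed Q := by
    rw [l.toExposed_add, l.toExposed_eq_singleton hl hxR, add_comm]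
  have hQface : IsExposed ℝ Q (l.toExposed Q) := ContinuousLinearMap.toExposed.isExposed
  have hPface : IsExposed ℝ (Q + R) (l.toExposed (Q + R)) :=
    ContinuousLinearMap.toExposed.isExposed
  obtain ⟨q₀, hq₀, hq₀max⟩ := hQ.exists_isMaxOn hQne l.continuous.continuousOn
  obtain ⟨q, hq⟩ := (hQface.isCompact hQ).extremePoints_nonempty ⟨q₀, hq₀, isMaxOn_iff.1 hq₀max⟩
  refine ⟨q, hQface.isExtreme.extremePoints_subset_extremePoints hq,
    hPface.isExtreme.extremePoints_subset_extremePoints ?_⟩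
  rw [hface]
  exact add_mem_extremePoints_singleton_add hq x

lemma Set.Finite.extremePoints_convexHull_subset_exposedPoints {s : Set E} (hs : s.Finite) :
    (convexHull ℝ s).extremePoints ℝ ⊆ (convexHull ℝ s).exposedPoints ℝ := by
  intro x hx
  have hxs : x ∈ s := extremePoints_convexHull_subset hx
  have hx' : x ∉ convexHull ℝ (s \ {x}) := fun h =>
    (((convex_convexHull ℝ s).mem_extremePoints_iff_mem_sdiff_convexHull_sdiff).1 hx).2
      (convexHull_mono (Set.sdiff_subset_sdiff_left (subset_convexHull ℝ s)) h)
  obtain ⟨l, u, hlu, hux⟩ := geometric_hahn_banach_closed_point (convex_convexHull ℝ _)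
    ((hs.sdiff (t := {x})).isClosed_convexHull ℝ) hx'
  have hlt : ∀ y ∈ s, y ≠ x → l y < l x := fun y hy hyx =>
    (hlu y (subset_convexHull ℝ _ ⟨hy, hyx⟩)).trans hux
  have hle : ∀ y ∈ convexHull ℝ s, l y ≤ l x := by
    refine fun y hy => convexHull_min (t := {y | l y ≤ l x}) (fun z hz => ?_) ?_ hy
    · rcases eq_or_ne z x with rfl | hzx
      exacts [le_refl (l z), (hlt z hz hzx).le]
    · exact (convex_Iic (l x)).linear_preimage l.toLinearMap
  -- The face `F` cut out by `l` is compact convex and its only possible extreme point is `x`,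
  -- so Krein–Milman collapses it to `{x}`.
  set F := l.toExposed (convexHull ℝ s)
  have hFexp : IsExposed ℝ (convexHull ℝ s) F := ContinuousLinearMap.toExposed.isExposed
  have hext : F.extremePoints ℝ ⊆ {x} := fun y hy => by
    have hys : y ∈ s :=
      extremePoints_convexHull_subset (hFexp.isExtreme.extremePoints_subset_extremePoints hy)
    by_contra hyx
    exact (hlt y hys hyx).not_ge (hy.1.2 x (subset_convexHull ℝ s hxs))
  have hFx : F ⊆ {x} :=
    calc F = closure (convexHull ℝ (F.extremePoints ℝ)) :=
          (closure_convexHull_extremePoints (hFexp.isCompact (hs.isCompact_convexHull ℝ))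
            (hFexp.convex (convex_convexHull ℝ s))).symm
      _ ⊆ closure (convexHull ℝ {x}) := closure_mono (convexHull_mono hext)
      _ = {x} := by rw [convexHull_singleton, closure_singleton]
  exact ⟨hx.1, l, fun y hy => ⟨hle y hy, fun hxy => hFx ⟨hy, fun z hz => (hle z hz).trans hxy⟩⟩⟩

end Convex

namespace TropFact

variable {n : ℕ}

lemma toR_injective : Function.Injective (toR (n := n)) :=
  fun _ _ h => funext fun i => Int.cast_injective (congrFun h i)

lemma toR_sub (a b : Fin n → ℤ) : toR (a - b) = toR a - toR b := by
  funext i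
  simp [toR]

section Polytope

variable {P : Set (Fin n → ℝ)}

lemma IsPolytope.isCompact (hP : IsPolytope P) : IsCompact P := by
  obtain ⟨A, -, rfl⟩ := hP
  exact A.finite_toSet.isCompact_convexHull ℝ

lemma IsPolytope.convex (hP : IsPolytope P) : Convex ℝ P := by
  obtain ⟨A, -, rfl⟩ := hP
  exact convex_convexHull ℝ _

lemma IsPolytope.nonempty (hP : IsPolytope P) : P.Nonempty := by
  obtain ⟨A, hA, rfl⟩ := hP
  exact (Finset.coe_nonempty.2 hA).convexHull

lemma IsPolytope.extremePoints_subset_exposedPoints (hP : IsPolytope P) :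
    P.extremePoints ℝ ⊆ P.exposedPoints ℝ := by
  obtain ⟨A, -, rfl⟩ := hP
  exact A.finite_toSet.extremePoints_convexHull_subset_exposedPoints

lemma IsLatticePolytope.isPolytope (hP : IsLatticePolytope P) : IsPolytope P := by
  obtain ⟨A, hA, rfl⟩ := hP
  exact ⟨A.image toR, hA.image _, by rw [Finset.coe_image]⟩

lemma IsLatticePolytope.extremePoints_subset_range (hP : IsLatticePolytope P) :
    P.extremePoints ℝ ⊆ Set.range toR := by
  obtain ⟨A, -, rfl⟩ := hP
  exact extremePoints_convexHull_subset.trans (Set.image_subset_range _ _)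

lemma IsPolytope.isLatticePolytope_of_extremePoints_subset (hP : IsPolytope P)
    (h : P.extremePoints ℝ ⊆ Set.range toR) : IsLatticePolytope P := by
  have hfin : (P.extremePoints ℝ).Finite := by
    obtain ⟨A, -, rfl⟩ := hP
    exact A.finite_toSet.subset extremePoints_convexHull_subset
  have hS : (toR ⁻¹' P.extremePoints ℝ).Finite := hfin.preimage toR_injective.injOn
  have himage : toR '' (toR ⁻¹' P.extremePoints ℝ) = P.extremePoints ℝ :=
    Set.image_preimage_eq_of_subset h
  refine ⟨hS.toFinset, ?_, ?_⟩
  · obtain ⟨x, hx⟩ := hP.isCompact.extremePoints_nonempty hP.nonempty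
    obtain ⟨a, rfl⟩ := h hx
    exact ⟨a, hS.mem_toFinset.2 hx⟩
  · rw [hS.coe_toFinset, himage, ← hfin.isClosed_convexHull ℝ |>.closure_eq,
      closure_convexHull_extremePoints hP.isCompact hP.convex]

end Polytope

/-- If `x ∉ R`, a functional separating `x` from `R` breaks `x + q₀ ∈ Q + R` for a
maximizer `q₀` of it on `Q`. -/
lemma mdiff_add_cancel_left {Q R : Set (Fin n → ℝ)} (hQ : IsCompact Q) (hQne : Q.Nonempty)
    (hR : IsClosed R) (hRc : Convex ℝ R) : mdiff (Q + R) Q = R := by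
  ext x
  constructor
  · intro hx
    by_contra hxR
    obtain ⟨l, u, hlu, hux⟩ := geometric_hahn_banach_closed_point hRc hR hxR
    obtain ⟨q₀, hq₀, hmax⟩ := hQ.exists_isMaxOn hQne l.continuous.continuousOn
    obtain ⟨q, hq, r, hr, hqr⟩ := hx ⟨q₀, hq₀, rfl⟩
    have hl := congrArg l hqr
    rw [map_add, map_add] at hl
    linarith [isMaxOn_iff.1 hmax q hq, hlu r hr]
  · rintro hx _ ⟨q, hq, rfl⟩
    show x + q ∈ Q + R
    rw [add_comm x q]
    exact Set.add_mem_add hq hx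

/-- **Lemma (signed Minkowski sums, (iv)).** If `P, Q` are lattice polytopes and
`Q ≤ P`, then `P - Q` is a lattice polytope. -/
theorem stmt_8 {n : ℕ} (P Q : Set (Fin n → ℝ)) (hP : IsLatticePolytope P)
    (hQ : IsLatticePolytope Q) (h : IsSummand Q P) :
    IsLatticePolytope (mdiff P Q) := by
  obtain ⟨R, hR, rfl⟩ := h
  have hQ' := hQ.isPolytope
  rw [mdiff_add_cancel_left hQ'.isCompact hQ'.nonempty hR.isCompact.isClosed hR.convex]
  refine hR.isLatticePolytope_of_extremePoints_subset fun x hx => ?_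
  obtain ⟨q, hq, hxq⟩ := exists_add_mem_extremePoints_add hQ'.isCompact hQ'.nonempty
    (hR.extremePoints_subset_exposedPoints hx)
  obtain ⟨a, ha⟩ := hP.extremePoints_subset_range hxq
  obtain ⟨b, hb⟩ := hQ.extremePoints_subset_range hq
  exact ⟨a - b, by rw [toR_sub, ha, hb, add_sub_cancel_right]⟩

end TropFact
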